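/- arXiv:2210.07754 — 3 statements merged into one kernel-verified Lean document; each statement's English description precedes it below -/
import Mathlib

section
/- (Schur–Ostrowski verification for f_{q,L}) Let q, L ≥ 2, let (p_1,...,p_q) be a probability vector, and let k ≠ j with p_k > p_j. Then (∂/∂p_k − ∂/∂p_j) f_{q,L}(p_1,...,p_q) = L · Σ binom(L−1; a) Π_{i∉{k,j}} p_i^{a_i} (p_k^{a_k} p_j^{a_j} − p_k^{a_j} p_j^{a_k}), where the sum is over a ∈ A_{q,L-1} with a_k > a_j and a_k = max{a}; in particular this quantity is nonnegative. -/
/-!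
Differentiating the monomial `P ^ a` in `p_k` gives `a_k P ^ (a - e_k)`. Writing `a = b + e_k` with
`b ∈ A_{q,L-1}` and using `a_k binom(L; a) = L binom(L-1; b)`, the partial derivative becomes
`L Σ_b binom(L-1; b) max(b + e_k) P ^ b`, and `max(b + e_k) = max b + [b_k = max b]`. In
`∂_k - ∂_j` the `max b` terms cancel, leaving `[b_k = max b] - [b_j = max b]`; swapping the
coordinates `k` and `j` carries the negative part onto the positive one, which gives the formula.
Each of its terms is nonnegative since `p_k ^ a_k p_j ^ a_j ≥ p_k ^ a_j p_j ^ a_k` when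
`a_k > a_j` and `p_k ≥ p_j ≥ 0`.
-/

open Finset

/-- The polynomial expression
`f_{q,L}(p) = Σ_{a ∈ A_{q,L}} binom(L; a) · max{a} · Π_i p_i^{a_i}`. -/
noncomputable def fqLpoly (q L : ℕ) (P : Fin q → ℝ) : ℝ :=
  ∑ a ∈ Finset.Nat.antidiagonalTuple q L,
    (Nat.multinomial Finset.univ a : ℝ) * ((Finset.univ.sup a : ℕ) : ℝ) *
      ∏ i, P i ^ a i

open scoped Nat

theorem pow_mul_pow_le_pow_mul_pow {R : Type*} [CommSemiring R] [PartialOrder R] [IsOrderedRing R]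
    {x y : R} (hy : 0 ≤ y) (hyx : y ≤ x) {m n : ℕ} (hmn : m ≤ n) :
    x ^ m * y ^ n ≤ x ^ n * y ^ m := by
  obtain ⟨d, rfl⟩ := exists_add_of_le hmn
  calc x ^ m * y ^ (m + d) = x ^ m * y ^ m * y ^ d := by ring
    _ ≤ x ^ m * y ^ m * x ^ d :=
        mul_le_mul_of_nonneg_left (pow_le_pow_left₀ hy hyx d)
          (mul_nonneg (pow_nonneg (hy.trans hyx) m) (pow_nonneg hy m))
    _ = x ^ (m + d) * y ^ m := by ring

section Multiindex
variable {ι : Type*} [Fintype ι]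

theorem sup_comp_perm (b : ι → ℕ) (σ : Equiv.Perm ι) : univ.sup (b ∘ σ) = univ.sup b := by
  rw [← Equiv.coe_toEmbedding, ← sup_map univ σ.toEmbedding b]; simp

theorem Nat.multinomial_comp_perm (b : ι → ℕ) (σ : Equiv.Perm ι) :
    Nat.multinomial univ (b ∘ σ) = Nat.multinomial univ b := by
  simp only [Nat.multinomial, Function.comp_apply, Equiv.sum_comp σ b,
    Equiv.prod_comp σ (fun i => (b i)!)]

variable [DecidableEq ι]

theorem sum_add_single_one (b : ι → ℕ) (k : ι) :
    ∑ i, (b + Pi.single k 1 : ι → ℕ) i = ∑ i, b i + 1 := by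
  simp [sum_add_distrib]

theorem Nat.succ_mul_multinomial_add_single (b : ι → ℕ) (k : ι) :
    (b k + 1) * Nat.multinomial univ (b + Pi.single k 1) =
      (∑ i, b i + 1) * Nat.multinomial univ b := by
  have hfact : ∏ i, ((b + Pi.single k 1 : ι → ℕ) i)! = (b k + 1) * ∏ i, (b i)! := by
    rw [← mul_prod_erase univ _ (mem_univ k), ← mul_prod_erase univ (fun i => (b i)!) (mem_univ k),
      prod_congr rfl fun i hi => by
        rw [Pi.add_apply, Pi.single_eq_of_ne (ne_of_mem_erase hi), add_zero]]
    simp [Nat.factorial_succ, mul_assoc]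
  apply Nat.eq_of_mul_eq_mul_left (Nat.prod_factorial_pos univ b)
  calc (∏ i, (b i)!) * ((b k + 1) * Nat.multinomial univ (b + Pi.single k 1))
      = (∏ i, ((b + Pi.single k 1 : ι → ℕ) i)!) * Nat.multinomial univ (b + Pi.single k 1) := by
        rw [hfact]; ring
    _ = (∑ i, b i + 1)! := by
        rw [Nat.multinomial_spec, sum_add_single_one]
    _ = (∏ i, (b i)!) * ((∑ i, b i + 1) * Nat.multinomial univ b) := by
        rw [Nat.factorial_succ, ← Nat.multinomial_spec]; ring

theorem sup_add_single_one (b : ι → ℕ) (k : ι) :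
    univ.sup (b + Pi.single k 1) = univ.sup b + if b k = univ.sup b then 1 else 0 := by
  have hle : ∀ i, b i ≤ univ.sup b := fun i => le_sup (mem_univ i)
  have hk : b k + 1 ≤ univ.sup (b + Pi.single k 1) := by
    have := le_sup (f := b + Pi.single k 1) (mem_univ k)
    rwa [Pi.add_apply, Pi.single_eq_same] at this
  have hmono : univ.sup b ≤ univ.sup (b + Pi.single k 1) :=
    sup_mono_fun fun i _ => Nat.le_add_right _ _
  have hsucc : univ.sup (b + Pi.single k 1) ≤ univ.sup b + 1 :=
    Finset.sup_le fun i _ => add_le_add (hle i) (by rw [Pi.single_apply]; split_ifs <;> simp)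
  split_ifs with h
  · omega
  · refine le_antisymm (Finset.sup_le fun i _ => ?_) (by simpa using hmono)
    rcases eq_or_ne i k with rfl | hik
    · simpa using lt_of_le_of_ne (hle i) h
    · simp [Pi.single_eq_of_ne hik, hle]

@[simp]
theorem mem_piAntidiag_univ {n : ℕ} {f : ι → ℕ} : f ∈ piAntidiag univ n ↔ ∑ i, f i = n := by
  simp

theorem sum_piAntidiag_succ_eq_sum_add_single {M : Type*} [AddCommMonoid M] (n : ℕ) (k : ι)
    (F : (ι → ℕ) → M) (hF : ∀ a, a k = 0 → F a = 0) :
    ∑ a ∈ piAntidiag univ (n + 1), F a = ∑ b ∈ piAntidiag univ n, F (b + Pi.single k 1) := by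
  rw [← sum_image fun b _ c _ h => add_right_cancel h]
  refine (sum_subset (fun a ha => ?_) fun a ha hna => hF a ?_).symm
  · obtain ⟨b, hb, rfl⟩ := mem_image.1 ha
    rw [mem_piAntidiag_univ] at hb ⊢
    rw [sum_add_single_one, hb]
  · by_contra hak
    have hle : Pi.single k 1 ≤ a := fun i => by
      rw [Pi.single_apply]
      split_ifs with h
      · exact h ▸ Nat.one_le_iff_ne_zero.2 hak
      · exact Nat.zero_le _
    refine hna (mem_image.2 ⟨a - Pi.single k 1, ?_, tsub_add_cancel_of_le hle⟩)
    have := sum_add_single_one (a - Pi.single k 1) k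
    rw [tsub_add_cancel_of_le hle] at this
    rw [mem_piAntidiag_univ] at ha ⊢
    omega

theorem sum_piAntidiag_comp_perm {M : Type*} [AddCommMonoid M] (n : ℕ) (σ : Equiv.Perm ι)
    (F : (ι → ℕ) → M) :
    ∑ b ∈ piAntidiag univ n, F (b ∘ σ) = ∑ b ∈ piAntidiag univ n, F b :=
  sum_nbij' (· ∘ σ) (· ∘ σ.symm)
    (fun b hb => by simpa [Equiv.sum_comp σ b] using hb)
    (fun b hb => by simpa [Equiv.sum_comp σ.symm b] using hb)
    (fun b _ => by ext; simp) (fun b _ => by ext; simp) fun _ _ => rfl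

theorem sum_multinomial_maxIndicator_sub_eq {R : Type*} [CommRing R] (n : ℕ) {k j : ι} (hkj : k ≠ j)
    (P : ι → R) :
    ∑ b ∈ piAntidiag univ n, (Nat.multinomial univ b : R) *
        ((if b k = univ.sup b then 1 else 0) - (if b j = univ.sup b then 1 else 0)) *
        ∏ i, P i ^ b i =
      ∑ b ∈ (piAntidiag univ n).filter (fun b => b j < b k ∧ b k = univ.sup b),
        (Nat.multinomial univ b : R) * (∏ i ∈ univ \ {k, j}, P i ^ b i) *
          (P k ^ b k * P j ^ b j - P k ^ b j * P j ^ b k) := by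
  set W : (ι → ℕ) → R := fun b => (Nat.multinomial univ b : R) * ∏ i, P i ^ b i
  have hsplit : ∀ b : ι → ℕ, ∏ i, P i ^ b i =
      (∏ i ∈ univ \ {k, j}, P i ^ b i) * (P k ^ b k * P j ^ b j) := fun b => by
    rw [← prod_sdiff (subset_univ {k, j}), prod_pair hkj]
  have hindicator : ∀ b : ι → ℕ,
      ((if b k = univ.sup b then 1 else 0) - (if b j = univ.sup b then 1 else 0) : R) =
        (if b j < b k ∧ b k = univ.sup b then 1 else 0) -
          (if b k < b j ∧ b j = univ.sup b then 1 else 0) := fun b => by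
    have hk : b k ≤ univ.sup b := le_sup (mem_univ k)
    have hj : b j ≤ univ.sup b := le_sup (mem_univ j)
    split_ifs <;> grind
  have hswap : ∑ b ∈ piAntidiag univ n, (if b k < b j ∧ b j = univ.sup b then W b else 0) =
      ∑ b ∈ piAntidiag univ n,
        (if b j < b k ∧ b k = univ.sup b then W (b ∘ Equiv.swap k j) else 0) := by
    rw [← sum_piAntidiag_comp_perm n (Equiv.swap k j)]
    simp [sup_comp_perm, Equiv.swap_apply_left, Equiv.swap_apply_right]
  have hothers : ∀ b : ι → ℕ, ∏ i ∈ univ \ {k, j}, P i ^ (b ∘ Equiv.swap k j) i =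
      ∏ i ∈ univ \ {k, j}, P i ^ b i := fun b => prod_congr rfl fun i hi => by
    simp only [mem_sdiff, mem_insert, mem_singleton, not_or] at hi
    rw [Function.comp_apply, Equiv.swap_apply_of_ne_of_ne hi.2.1 hi.2.2]
  calc _ = ∑ b ∈ piAntidiag univ n, ((if b j < b k ∧ b k = univ.sup b then W b else 0) -
          (if b k < b j ∧ b j = univ.sup b then W b else 0)) :=
        sum_congr rfl fun b _ => by rw [hindicator b]; split_ifs <;> simp [W]
    _ = ∑ b ∈ piAntidiag univ n,
          (if b j < b k ∧ b k = univ.sup b then W b - W (b ∘ Equiv.swap k j) else 0) := by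
        rw [sum_sub_distrib, hswap, ← sum_sub_distrib]
        exact sum_congr rfl fun b _ => by split_ifs <;> simp
    _ = _ := by
        rw [← sum_filter]
        refine sum_congr rfl fun b _ => ?_
        simp only [W]
        rw [Nat.multinomial_comp_perm, hsplit b, hsplit (b ∘ Equiv.swap k j), hothers,
          Function.comp_apply, Function.comp_apply, Equiv.swap_apply_left, Equiv.swap_apply_right]
        ring

theorem hasDerivAt_prod_pow_add_mul {𝕜 : Type*} [NontriviallyNormedField 𝕜] (P v : ι → 𝕜)
    (a : ι → ℕ) :
    HasDerivAt (fun t => ∏ i, (P i + t * v i) ^ a i)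
      (∑ i, v i * (a i * ∏ i', P i' ^ (a - Pi.single i 1 : ι → ℕ) i')) 0 := by
  have hline : ∀ i ∈ univ, HasDerivAt (fun t => (P i + t * v i) ^ a i)
      (a i * P i ^ (a i - 1) * v i) 0 := fun i _ => by
    simpa using (((hasDerivAt_id (0 : 𝕜)).mul_const (v i)).const_add (P i)).fun_pow (a i)
  refine (HasDerivAt.fun_finsetProd hline).congr_deriv (sum_congr rfl fun i _ => ?_)
  have herase : ∏ i' ∈ univ.erase i, P i' ^ (a - Pi.single i 1 : ι → ℕ) i' =
      ∏ i' ∈ univ.erase i, P i' ^ a i' := prod_congr rfl fun i' hi' => by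
    rw [Pi.sub_apply, Pi.single_eq_of_ne (ne_of_mem_erase hi'), Nat.sub_zero]
  rw [← mul_prod_erase univ _ (mem_univ i), herase]
  simp only [zero_mul, add_zero, Pi.sub_apply, Pi.single_eq_same, smul_eq_mul]
  ring

end Multiindex

/-- `∂ f_{q,L} / ∂ p_k`. The truncated exponent `a - e_k` differs from the true one only when
`a_k = 0`, where the factor `a_k` kills the term. -/
noncomputable def fqLpolyPartial (q L : ℕ) (k : Fin q) (P : Fin q → ℝ) : ℝ :=
  ∑ a ∈ Finset.Nat.antidiagonalTuple q L,
    (Nat.multinomial univ a : ℝ) * ((univ.sup a : ℕ) : ℝ) *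
      (a k * ∏ i, P i ^ (a - Pi.single k 1 : Fin q → ℕ) i)

theorem hasDerivAt_fqLpoly_add_mul (q L : ℕ) (P v : Fin q → ℝ) :
    HasDerivAt (fun t => fqLpoly q L (fun i => P i + t * v i))
      (∑ i, v i * fqLpolyPartial q L i P) 0 := by
  refine (HasDerivAt.fun_sum fun a _ => (hasDerivAt_prod_pow_add_mul P v a).const_mul
    ((Nat.multinomial univ a : ℝ) * ((univ.sup a : ℕ) : ℝ))).congr_deriv ?_
  simp only [fqLpolyPartial, mul_sum]
  rw [sum_comm]
  exact sum_congr rfl fun a _ => sum_congr rfl fun i _ => by ring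

theorem fqLpolyPartial_eq (q L : ℕ) (k : Fin q) (P : Fin q → ℝ) :
    fqLpolyPartial q L k P = L * ∑ b ∈ Finset.Nat.antidiagonalTuple q (L - 1),
      (Nat.multinomial univ b : ℝ) *
        (((univ.sup b : ℕ) : ℝ) + if b k = univ.sup b then 1 else 0) * ∏ i, P i ^ b i := by
  cases L with
  | zero => simp [fqLpolyPartial, Finset.Nat.antidiagonalTuple_zero_right]
  | succ n =>
    rw [fqLpolyPartial, ← piAntidiag_univ_fin_eq_antidiagonalTuple,
      sum_piAntidiag_succ_eq_sum_add_single n k _ fun a ha => by simp [ha],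
      Nat.add_sub_cancel, ← piAntidiag_univ_fin_eq_antidiagonalTuple, mul_sum]
    refine sum_congr rfl fun b hb => ?_
    have hmult : ((b k + 1 : ℕ) : ℝ) * Nat.multinomial univ (b + Pi.single k 1) =
        (n + 1 : ℕ) * Nat.multinomial univ b := by
      rw [← Nat.cast_mul, Nat.succ_mul_multinomial_add_single, mem_piAntidiag_univ.1 hb]
      push_cast; ring
    rw [sup_add_single_one, add_tsub_cancel_right, Pi.add_apply, Pi.single_eq_same]
    push_cast at hmult ⊢
    linear_combination (((univ.sup b : ℕ) : ℝ) + if b k = univ.sup b then 1 else 0) *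
      (∏ i, P i ^ b i) * hmult

theorem fqLpolyPartial_sub (q L : ℕ) {k j : Fin q} (hkj : k ≠ j) (P : Fin q → ℝ) :
    fqLpolyPartial q L k P - fqLpolyPartial q L j P = L *
      ∑ a ∈ (Finset.Nat.antidiagonalTuple q (L - 1)).filter
          (fun a => a j < a k ∧ a k = univ.sup a),
        (Nat.multinomial univ a : ℝ) * (∏ i ∈ univ \ {k, j}, P i ^ a i) *
          (P k ^ a k * P j ^ a j - P k ^ a j * P j ^ a k) := by
  rw [fqLpolyPartial_eq, fqLpolyPartial_eq, ← mul_sub, ← sum_sub_distrib,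
    ← piAntidiag_univ_fin_eq_antidiagonalTuple, ← sum_multinomial_maxIndicator_sub_eq _ hkj]
  congr 1
  exact sum_congr rfl fun b _ => by ring

theorem stmt4_general (q L : ℕ) (P : Fin q → ℝ)
    (hP : ∀ i, 0 ≤ P i) (k j : Fin q) (hkj : k ≠ j)
    (hpkj : P j < P k) :
    let D : ℝ := (L : ℝ) *
      ∑ a ∈ (Finset.Nat.antidiagonalTuple q (L - 1)).filter
          (fun a => a j < a k ∧ a k = Finset.univ.sup a),
        (Nat.multinomial Finset.univ a : ℝ) *
          (∏ i ∈ Finset.univ \ {k, j}, P i ^ a i) *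
          (P k ^ a k * P j ^ a j - P k ^ a j * P j ^ a k)
    HasDerivAt (fun t => fqLpoly q L
        (fun i => P i + t * ((if i = k then (1 : ℝ) else 0) - (if i = j then 1 else 0))))
      D 0 ∧ 0 ≤ D := by
  intro D
  have hD : ∑ i, ((if i = k then (1 : ℝ) else 0) - (if i = j then 1 else 0)) *
      fqLpolyPartial q L i P = D := by
    simp only [sub_mul, ite_mul, one_mul, zero_mul, sum_sub_distrib, sum_ite_eq', mem_univ,
      if_true]
    exact fqLpolyPartial_sub q L hkj P
  refine ⟨hD ▸ hasDerivAt_fqLpoly_add_mul q L P _, mul_nonneg (Nat.cast_nonneg L) ?_⟩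
  refine sum_nonneg fun a ha => mul_nonneg
    (mul_nonneg (Nat.cast_nonneg _) (prod_nonneg fun i _ => pow_nonneg (hP i) _)) (sub_nonneg.2 ?_)
  exact pow_mul_pow_le_pow_mul_pow (hP j) hpkj.le (mem_filter.1 ha).2.1.le

theorem stmt4 (q L : ℕ) (hq : 2 ≤ q) (hL : 2 ≤ L) (P : Fin q → ℝ)
    (hP : ∀ i, 0 ≤ P i) (hPsum : ∑ i, P i = 1) (k j : Fin q) (hkj : k ≠ j)
    (hpkj : P j < P k) :
    let D : ℝ := (L : ℝ) *
      ∑ a ∈ (Finset.Nat.antidiagonalTuple q (L - 1)).filter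
          (fun a => a j < a k ∧ a k = Finset.univ.sup a),
        (Nat.multinomial Finset.univ a : ℝ) *
          (∏ i ∈ Finset.univ \ {k, j}, P i ^ a i) *
          (P k ^ a k * P j ^ a j - P k ^ a j * P j ^ a k)
    HasDerivAt (fun t => fqLpoly q L
        (fun i => P i + t * ((if i = k then (1 : ℝ) else 0) - (if i = j then 1 else 0))))
      D 0 ∧ 0 ≤ D :=
  stmt4_general q L P hP k j hkj hpkj
end

section
/- For q ≥ 2, L ≥ 2, the function g_{q,L}(w) = f_{q,L}(w/(q−1), ..., w/(q−1), 1−w) is non-increasing on [0, (q−1)/q] and non-decreasing on [(q−1)/q, 1]. -/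
open Finset

/-- The plurality of a tuple of symbols. -/
def plur {q L : ℕ} (x : Fin L → Fin q) : ℕ :=
  Finset.univ.sup fun a : Fin q => (Finset.univ.filter fun i => x i = a).card

/-- `f_{q,L}(P)`: the expected plurality of `L` i.i.d. samples from `P`. -/
noncomputable def fqL (q L : ℕ) (P : Fin q → ℝ) : ℝ :=
  ∑ x : Fin L → Fin q, (∏ i, P (x i)) * (plur x : ℝ)

/-- The distribution `P_{q,w} = (w/(q−1), ..., w/(q−1), 1−w)`. -/
noncomputable def PqW (q : ℕ) (w : ℝ) : Fin q → ℝ :=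
  fun i => if (i : ℕ) = q - 1 then 1 - w else w / ((q : ℝ) - 1)

/-!
Write `g(w) = f_{q,L}(P_{q,w})` with `L = n + 1`. By the chain rule
`g'(w) = L ∑_b P'_b E[plur(b, Y)]`, where `Y` is a tuple of `n` samples from `P_{q,w}` and
`P' = (1/(q-1), …, 1/(q-1), -1)` sums to zero, so `g'(w)` is a nonnegative combination of the
differences `E[plur(a, Y)] - E[plur(last, Y)]`. Exchanging the symbols `a` and `c` inside `Y`
shows `E[plur(a, Y)] ≤ E[plur(c, Y)]` whenever `P_a ≤ P_c` (the Schur–Ostrowski condition behind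
the Schur convexity of `f_{q,L}`). Hence `g'` has the sign of `P_last - P_a = 1 - w - w/(q-1)`,
which changes exactly at `w = (q-1)/q`.
-/

def symbolCount {q n : ℕ} (y : Fin n → Fin q) (b : Fin q) : ℕ :=
  #{j | y j = b}

lemma plur_eq_sup_symbolCount {q n : ℕ} (y : Fin n → Fin q) :
    plur y = univ.sup (symbolCount y) := rfl

lemma symbolCount_le_plur {q n : ℕ} (y : Fin n → Fin q) (b : Fin q) :
    symbolCount y b ≤ plur y :=
  le_sup (f := symbolCount y) (mem_univ b)

lemma symbolCount_comp {q n : ℕ} (σ : Equiv.Perm (Fin q)) (y : Fin n → Fin q) (b : Fin q) :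
    symbolCount (σ ∘ y) b = symbolCount y (σ.symm b) := by
  simp only [symbolCount, Function.comp_apply, ← Equiv.eq_symm_apply]

lemma plur_comp {q n : ℕ} (σ : Equiv.Perm (Fin q)) (y : Fin n → Fin q) :
    plur (σ ∘ y) = plur y := by
  have : symbolCount (σ ∘ y) = symbolCount y ∘ σ.symm := funext (symbolCount_comp σ y)
  rw [plur_eq_sup_symbolCount, plur_eq_sup_symbolCount, this]
  conv_rhs => rw [← map_univ_equiv σ.symm, sup_map]
  rfl

lemma prod_eq_prod_pow_symbolCount {q n : ℕ} (P : Fin q → ℝ) (y : Fin n → Fin q) :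
    ∏ j, P (y j) = ∏ b, P b ^ symbolCount y b := by
  simp_rw [symbolCount, ← prod_const, Finset.prod_fiberwise']

lemma symbolCount_insertNth {q n : ℕ} (i : Fin (n + 1)) (b : Fin q) (y : Fin n → Fin q)
    (c : Fin q) :
    symbolCount (i.insertNth b y) c = (if b = c then 1 else 0) + symbolCount y c := by
  simp only [symbolCount, card_filter, Fin.sum_univ_succAbove _ i, Fin.insertNth_apply_same,
    Fin.insertNth_apply_succAbove]

lemma plur_insertNth {q n : ℕ} (i : Fin (n + 1)) (b : Fin q) (y : Fin n → Fin q) :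
    plur (i.insertNth b y) = max (symbolCount y b + 1) (plur y) := by
  rw [plur_eq_sup_symbolCount]
  refine le_antisymm (Finset.sup_le fun c _ => ?_) (max_le ?_ (sup_mono_fun fun c _ => ?_))
  · rw [symbolCount_insertNth]
    split_ifs with h
    · subst h; omega
    · exact le_max_of_le_right (by simpa using symbolCount_le_plur y c)
  · have := le_sup (f := symbolCount (i.insertNth b y)) (mem_univ b)
    rw [symbolCount_insertNth, if_pos rfl] at this
    omega
  · change symbolCount y c ≤ symbolCount (i.insertNth b y) c
    rw [symbolCount_insertNth]
    omega

lemma plur_cons {q n : ℕ} (b : Fin q) (y : Fin n → Fin q) :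
    plur (Fin.cons b y : Fin (n + 1) → Fin q) = max (symbolCount y b + 1) (plur y) := by
  rw [← Fin.insertNth_zero', plur_insertNth]

lemma prod_le_prod_swap {q n : ℕ} {P : Fin q → ℝ} (hP : ∀ b, 0 ≤ P b) {a c : Fin q}
    (hac : P a ≤ P c) {y : Fin n → Fin q} (hy : symbolCount y c ≤ symbolCount y a) :
    ∏ j, P (y j) ≤ ∏ j, P (Equiv.swap a c (y j)) := by
  rcases eq_or_ne a c with rfl | hne
  · simp
  rw [show ∏ j, P (Equiv.swap a c (y j)) = ∏ j, (P ∘ Equiv.swap a c) (y j) from rfl,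
    prod_eq_prod_pow_symbolCount, prod_eq_prod_pow_symbolCount (P ∘ Equiv.swap a c),
    ← prod_mul_prod_compl {a, c}, ← prod_mul_prod_compl {a, c}, prod_pair hne, prod_pair hne]
  have hrest : ∏ b ∈ {a, c}ᶜ, P (Equiv.swap a c b) ^ symbolCount y b
      = ∏ b ∈ {a, c}ᶜ, P b ^ symbolCount y b := by
    refine prod_congr rfl fun b hb => ?_
    simp only [mem_compl, mem_insert, mem_singleton, not_or] at hb
    rw [Equiv.swap_apply_of_ne_of_ne hb.1 hb.2]
  simp only [Function.comp_apply, Equiv.swap_apply_left, Equiv.swap_apply_right]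
  rw [hrest]
  refine mul_le_mul_of_nonneg_right ?_ (prod_nonneg fun b _ => pow_nonneg (hP b) _)
  obtain ⟨d, hd⟩ := Nat.exists_eq_add_of_le hy
  have hcommon : 0 ≤ P a ^ symbolCount y c * P c ^ symbolCount y c :=
    mul_nonneg (pow_nonneg (hP a) _) (pow_nonneg (hP c) _)
  calc P a ^ symbolCount y a * P c ^ symbolCount y c
      = P a ^ symbolCount y c * P c ^ symbolCount y c * P a ^ d := by rw [hd]; ring
    _ ≤ P a ^ symbolCount y c * P c ^ symbolCount y c * P c ^ d :=
      mul_le_mul_of_nonneg_left (pow_le_pow_left₀ (hP a) hac d) hcommon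
    _ = P c ^ symbolCount y a * P a ^ symbolCount y c := by rw [hd]; ring

lemma sum_mul_le_sum_comp_mul_of_involutive {α : Type*} [Fintype α] {e : α → α}
    (he : Function.Involutive e) {f w : α → ℝ}
    (h : ∀ y, (f y - f (e y)) * (w y - w (e y)) ≤ 0) :
    ∑ y, f y * w y ≤ ∑ y, f (e y) * w y := by
  have hreindex (g : α → ℝ) : ∑ y, g (e y) = ∑ y, g y := Equiv.sum_comp (he.toPerm e) g
  have h1 := hreindex fun y => f y * w y
  have h2 := hreindex fun y => f (e y) * w y
  simp only [he _] at h2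
  have := sum_nonpos fun y (_ : y ∈ univ) => h y
  simp only [sub_mul, mul_sub, sum_sub_distrib] at this
  linarith

/-- `∂f_{q,n+1}/∂P_b = (n + 1) * expectedPlurCons n P b`. -/
noncomputable def expectedPlurCons {q : ℕ} (n : ℕ) (P : Fin q → ℝ) (b : Fin q) : ℝ :=
  ∑ y : Fin n → Fin q, (∏ j, P (y j)) * (plur (Fin.cons b y : Fin (n + 1) → Fin q) : ℝ)

lemma plur_cons_sub_mul_prod_sub_prod_swap_nonpos {q n : ℕ} {P : Fin q → ℝ} (hP : ∀ b, 0 ≤ P b)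
    {a c : Fin q} (hac : P a ≤ P c) (y : Fin n → Fin q) :
    ((plur (Fin.cons a y : Fin (n + 1) → Fin q) : ℝ) -
        plur (Fin.cons c y : Fin (n + 1) → Fin q)) *
      (∏ j, P (y j) - ∏ j, P (Equiv.swap a c (y j))) ≤ 0 := by
  simp only [plur_cons, Nat.cast_max, Nat.cast_add, Nat.cast_one]
  rcases le_total (symbolCount y a) (symbolCount y c) with hy | hy
  · have hswap : symbolCount (Equiv.swap a c ∘ y) c ≤ symbolCount (Equiv.swap a c ∘ y) a := by
      simpa [symbolCount_comp] using hy
    have := prod_le_prod_swap hP hac hswap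
    simp only [Function.comp_apply, Equiv.swap_apply_self] at this
    refine mul_nonpos_of_nonpos_of_nonneg (sub_nonpos.2 ?_) (sub_nonneg.2 this)
    gcongr
  · refine mul_nonpos_of_nonneg_of_nonpos (sub_nonneg.2 ?_)
      (sub_nonpos.2 (prod_le_prod_swap hP hac hy))
    gcongr

theorem expectedPlurCons_le {q n : ℕ} {P : Fin q → ℝ} (hP : ∀ b, 0 ≤ P b) {a c : Fin q}
    (hac : P a ≤ P c) : expectedPlurCons n P a ≤ expectedPlurCons n P c := by
  have hcons (y : Fin n → Fin q) : plur (Fin.cons a (Equiv.swap a c ∘ y) : Fin (n + 1) → Fin q)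
      = plur (Fin.cons c y : Fin (n + 1) → Fin q) := by
    have : (Fin.cons a (Equiv.swap a c ∘ y) : Fin (n + 1) → Fin q)
        = Equiv.swap a c ∘ Fin.cons c y := by
      rw [Fin.comp_cons, Equiv.swap_apply_right]
    rw [this, plur_comp]
  have := sum_mul_le_sum_comp_mul_of_involutive (e := (Equiv.swap a c ∘ ·))
    (fun y => funext fun j => Equiv.swap_apply_self a c (y j))
    (f := fun y => (plur (Fin.cons a y : Fin (n + 1) → Fin q) : ℝ)) (w := fun y => ∏ j, P (y j))
    fun y => by
      simpa only [hcons, Function.comp_apply] using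
        plur_cons_sub_mul_prod_sub_prod_swap_nonpos hP hac y
  simpa only [expectedPlurCons, mul_comm, hcons] using this

lemma prod_erase_eq_prod_succAbove {M : Type*} [CommMonoid M] {n : ℕ} (i : Fin (n + 1))
    (f : Fin (n + 1) → M) : ∏ j ∈ univ.erase i, f j = ∏ j, f (i.succAbove j) := by
  rw [← compl_singleton, ← Fin.image_succAbove_univ,
    prod_image Fin.succAbove_right_injective.injOn]

lemma sum_prod_erase_mul_plur {q n : ℕ} (p p' : Fin q → ℝ) (i : Fin (n + 1)) :
    ∑ x : Fin (n + 1) → Fin q, (∏ j ∈ univ.erase i, p (x j)) * p' (x i) * (plur x : ℝ)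
      = ∑ b, p' b * expectedPlurCons n p b := by
  rw [← (Fin.insertNthEquiv (fun _ => Fin q) i).sum_comp, Fintype.sum_prod_type]
  refine sum_congr rfl fun b _ => ?_
  rw [expectedPlurCons, mul_sum]
  refine sum_congr rfl fun y _ => ?_
  rw [show Fin.insertNthEquiv (fun _ => Fin q) i (b, y) = i.insertNth b y from rfl]
  simp only [prod_erase_eq_prod_succAbove, Fin.insertNth_apply_same,
    Fin.insertNth_apply_succAbove, plur_insertNth, plur_cons]
  ring

theorem hasDerivAt_fqL_comp {q n : ℕ} {P : ℝ → Fin q → ℝ} {P' : Fin q → ℝ} {w : ℝ}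
    (hP : ∀ b, HasDerivAt (fun w => P w b) (P' b) w) :
    HasDerivAt (fun w => fqL q (n + 1) (P w))
      ((n + 1) * ∑ b, P' b * expectedPlurCons n (P w) b) w := by
  have hterm (x : Fin (n + 1) → Fin q) :
      HasDerivAt (fun w => (∏ i, P w (x i)) * (plur x : ℝ))
        ((∑ i, (∏ j ∈ univ.erase i, P w (x j)) * P' (x i)) * plur x) w := by
    simpa using (HasDerivAt.fun_finsetProd fun i (_ : i ∈ univ) => hP (x i)).mul_const _
  refine (HasDerivAt.fun_sum fun x (_ : x ∈ univ) => hterm x).congr_deriv ?_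
  simp only [sum_mul]
  rw [sum_comm, sum_congr rfl fun i _ => sum_prod_erase_mul_plur (P w) P' i, sum_const,
    card_univ, Fintype.card_fin, nsmul_eq_mul]
  push_cast
  ring

lemma sum_mul_nonpos_of_sum_eq_zero {ι : Type*} [Fintype ι] {d G : ι → ℝ} (ℓ : ι)
    (hd : ∑ i, d i = 0) (hd_nonneg : ∀ i ≠ ℓ, 0 ≤ d i) (hG : ∀ i, G i ≤ G ℓ) :
    ∑ i, d i * G i ≤ 0 := by
  have hshift : ∑ i, d i * G i = ∑ i, d i * (G i - G ℓ) := by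
    simp only [mul_sub, sum_sub_distrib, ← sum_mul, hd, zero_mul, sub_zero]
  rw [hshift]
  refine sum_nonpos fun i _ => ?_
  rcases eq_or_ne i ℓ with rfl | hi
  · simp
  · exact mul_nonpos_of_nonneg_of_nonpos (hd_nonneg i hi) (sub_nonpos.2 (hG i))

lemma sum_mul_nonneg_of_sum_eq_zero {ι : Type*} [Fintype ι] {d G : ι → ℝ} (ℓ : ι)
    (hd : ∑ i, d i = 0) (hd_nonneg : ∀ i ≠ ℓ, 0 ≤ d i) (hG : ∀ i, G ℓ ≤ G i) :
    0 ≤ ∑ i, d i * G i := by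
  simpa using sum_mul_nonpos_of_sum_eq_zero (G := -G) ℓ hd hd_nonneg fun i => neg_le_neg (hG i)

lemma fqL_zero (q : ℕ) (P : Fin q → ℝ) : fqL q 0 P = 0 := by
  simp [fqL, plur]

noncomputable def derivPqW (q : ℕ) (b : Fin q) : ℝ :=
  if (b : ℕ) = q - 1 then -1 else ((q : ℝ) - 1)⁻¹

lemma hasDerivAt_PqW (q : ℕ) (b : Fin q) (w : ℝ) :
    HasDerivAt (fun w => PqW q w b) (derivPqW q b) w := by
  unfold PqW derivPqW
  split_ifs
  · simpa using (hasDerivAt_id w).const_sub 1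
  · simpa [div_eq_mul_inv] using (hasDerivAt_id w).div_const ((q : ℝ) - 1)

lemma derivPqW_nonneg {q : ℕ} {b : Fin q} (hb : (b : ℕ) ≠ q - 1) : 0 ≤ derivPqW q b := by
  rw [derivPqW, if_neg hb]
  exact inv_nonneg.2 (sub_nonneg.2 (Nat.one_le_cast.2 b.pos))

lemma sum_derivPqW {q : ℕ} (hq : 2 ≤ q) : ∑ b, derivPqW q b = 0 := by
  have hrest : ∀ b ∈ ({⟨q - 1, by omega⟩}ᶜ : Finset (Fin q)), derivPqW q b = ((q : ℝ) - 1)⁻¹ :=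
    fun b hb => if_neg (by simpa [Fin.ext_iff] using hb)
  have hq' : (q : ℝ) - 1 ≠ 0 := by
    have : (2 : ℝ) ≤ q := by exact_mod_cast hq
    linarith
  rw [Fintype.sum_eq_add_sum_compl ⟨q - 1, by omega⟩, sum_congr rfl hrest, sum_const, card_compl,
    card_singleton, Fintype.card_fin, derivPqW, if_pos rfl, nsmul_eq_mul, Nat.cast_sub (by omega),
    Nat.cast_one, mul_inv_cancel₀ hq']
  ring

lemma sum_derivPqW_mul_nonpos {q : ℕ} (hq : 2 ≤ q) {ℓ : Fin q} (hℓ : (ℓ : ℕ) = q - 1)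
    {G : Fin q → ℝ} (hG : ∀ b, G b ≤ G ℓ) : ∑ b, derivPqW q b * G b ≤ 0 :=
  sum_mul_nonpos_of_sum_eq_zero ℓ (sum_derivPqW hq)
    (fun _ hb => derivPqW_nonneg (hℓ ▸ Fin.val_ne_of_ne hb)) hG

lemma sum_derivPqW_mul_nonneg {q : ℕ} (hq : 2 ≤ q) {ℓ : Fin q} (hℓ : (ℓ : ℕ) = q - 1)
    {G : Fin q → ℝ} (hG : ∀ b, G ℓ ≤ G b) : 0 ≤ ∑ b, derivPqW q b * G b :=
  sum_mul_nonneg_of_sum_eq_zero ℓ (sum_derivPqW hq)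
    (fun _ hb => derivPqW_nonneg (hℓ ▸ Fin.val_ne_of_ne hb)) hG

lemma PqW_nonneg {q : ℕ} {w : ℝ} (hw0 : 0 ≤ w) (hw1 : w ≤ 1) (b : Fin q) : 0 ≤ PqW q w b := by
  unfold PqW
  split_ifs
  · linarith
  · exact div_nonneg hw0 (sub_nonneg.2 (Nat.one_le_cast.2 b.pos))

lemma PqW_le_PqW_last {q : ℕ} (hq : 2 ≤ q) {w : ℝ} (hw : w ≤ ((q : ℝ) - 1) / q) {ℓ : Fin q}
    (hℓ : (ℓ : ℕ) = q - 1) (b : Fin q) : PqW q w b ≤ PqW q w ℓ := by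
  have hq' : (2 : ℝ) ≤ q := by exact_mod_cast hq
  unfold PqW
  rw [if_pos hℓ]
  split_ifs
  · rfl
  rw [le_div_iff₀ (by linarith)] at hw
  rw [div_le_iff₀ (by linarith)]
  linarith

lemma PqW_last_le_PqW {q : ℕ} (hq : 2 ≤ q) {w : ℝ} (hw : ((q : ℝ) - 1) / q ≤ w) {ℓ : Fin q}
    (hℓ : (ℓ : ℕ) = q - 1) (b : Fin q) : PqW q w ℓ ≤ PqW q w b := by
  have hq' : (2 : ℝ) ≤ q := by exact_mod_cast hq
  unfold PqW
  rw [if_pos hℓ]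
  split_ifs
  · rfl
  rw [div_le_iff₀ (by linarith)] at hw
  rw [le_div_iff₀ (by linarith)]
  linarith

theorem stmt10_general (q L : ℕ) (hq : 2 ≤ q) :
    AntitoneOn (fun w => fqL q L (PqW q w)) (Set.Icc (0 : ℝ) (((q : ℝ) - 1) / q)) ∧
    MonotoneOn (fun w => fqL q L (PqW q w)) (Set.Icc (((q : ℝ) - 1) / q) 1) := by
  rcases L with _ | n
  · simp only [fqL_zero]
    exact ⟨antitoneOn_const, monotoneOn_const⟩
  obtain ⟨ℓ, hℓ⟩ : ∃ ℓ : Fin q, (ℓ : ℕ) = q - 1 := ⟨⟨q - 1, by omega⟩, rfl⟩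
  have hderiv (w : ℝ) := hasDerivAt_fqL_comp (n := n) fun b => hasDerivAt_PqW q b w
  have hcont {s : Set ℝ} : ContinuousOn (fun w => fqL q (n + 1) (PqW q w)) s :=
    fun w _ => (hderiv w).continuousAt.continuousWithinAt
  have hq' : (2 : ℝ) ≤ q := by exact_mod_cast hq
  have hthreshold : ((q : ℝ) - 1) / q ∈ Set.Icc 0 1 :=
    ⟨div_nonneg (by linarith) (by linarith), div_le_one_of_le₀ (by linarith) (by linarith)⟩
  refine ⟨antitoneOn_of_hasDerivWithinAt_nonpos (convex_Icc _ _) hcont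
      (fun w _ => (hderiv w).hasDerivWithinAt) ?_,
    monotoneOn_of_hasDerivWithinAt_nonneg (convex_Icc _ _) hcont
      (fun w _ => (hderiv w).hasDerivWithinAt) ?_⟩ <;>
    rw [interior_Icc] <;> rintro w ⟨hw0, hw1⟩
  · have hP := PqW_nonneg (q := q) hw0.le (by linarith [hthreshold.2])
    exact mul_nonpos_of_nonneg_of_nonpos (by positivity) <| sum_derivPqW_mul_nonpos hq hℓ
      fun b => expectedPlurCons_le hP (PqW_le_PqW_last hq hw1.le hℓ b)
  · have hP := PqW_nonneg (q := q) (by linarith [hthreshold.1]) hw1.le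
    exact mul_nonneg (by positivity) <| sum_derivPqW_mul_nonneg hq hℓ
      fun b => expectedPlurCons_le hP (PqW_last_le_PqW hq hw0.le hℓ b)

theorem stmt10 (q L : ℕ) (hq : 2 ≤ q) (hL : 2 ≤ L) :
    AntitoneOn (fun w => fqL q L (PqW q w)) (Set.Icc (0 : ℝ) (((q : ℝ) - 1) / q)) ∧
    MonotoneOn (fun w => fqL q L (PqW q w)) (Set.Icc (((q : ℝ) - 1) / q) 1) :=
  stmt10_general q L hq
end

section
/- For integers q ≥ 2, L ≥ 2 and 1 ≤ ℓ ≤ q−1, the function f_{q,L,ℓ}(P) = E_{(X_1,...,X_L)~P^{⊗L}}[plur_ℓ(X_1,...,X_L)], where plur_ℓ(x_1,...,x_L) = max over ℓ-subsets Σ of [q] of |{i : x_i ∈ Σ}|, is Schur convex on the probability simplex Δ([q]). -/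
open Finset

/-- Sum of the `k` largest entries of `a`. -/
noncomputable def kMaxSum {d : ℕ} (a : Fin d → ℝ) (k : ℕ) : ℝ :=
  sSup ((fun s : Finset (Fin d) => ∑ i ∈ s, a i) '' {s : Finset (Fin d) | s.card = k})

/-- `a` majorizes `b`. -/
def Majorizes {d : ℕ} (a b : Fin d → ℝ) : Prop :=
  (∀ k : ℕ, kMaxSum b k ≤ kMaxSum a k) ∧ ∑ i, a i = ∑ i, b i

/-- The `ℓ`-plurality of a tuple: the maximal number of its entries covered by an
`ℓ`-subset of the alphabet. -/
def plurL {q L : ℕ} (ℓ : ℕ) (x : Fin L → Fin q) : ℕ :=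
  (Finset.univ.powersetCard ℓ).sup fun S : Finset (Fin q) =>
    (Finset.univ.filter fun i => x i ∈ S).card

/-- `f_{q,L,ℓ}(P)`: the expected `ℓ`-plurality of `L` i.i.d. samples from `P`. -/
noncomputable def fqLl (q L ℓ : ℕ) (P : Fin q → ℝ) : ℝ :=
  ∑ x : Fin L → Fin q, (∏ i, P (x i)) * (plurL ℓ x : ℝ)

/-!
Relabelling the alphabet does not change `fqLl`, so we may sort `P` and `Q` decreasingly and
move along the segment from `Q` to `P`, on which every point is a nonnegative decreasing vector.
In the direction `c = P - Q` the derivative of `fqLl` at `R` is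
`∑ k, ∑ v, c v * plurFiberSum ℓ k R v`, where `plurFiberSum ℓ k R v` collects the tuples whose
`k`-th letter is `v`, weighted by the other letters. Majorization makes the partial sums of `c`
nonnegative, so by Abel summation it suffices that `plurFiberSum ℓ k R` is nonnegative and
decreasing. For `v < w`, pair each tuple with the one obtained by swapping the letters `v` and
`w` away from position `k`: the change of plurality and the change of weight then have the same
sign, both being decided by which of `v`, `w` occurs more often among the other letters.
-/

lemma sum_mul_nonneg_of_partialSums_nonneg {ι : Type*} [LinearOrder ι] (s : Finset ι)
    (c g : ι → ℝ) (hg : AntitoneOn g s) (hg0 : ∀ i ∈ s, 0 ≤ g i)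
    (hc : ∀ j ∈ s, 0 ≤ ∑ i ∈ s with i ≤ j, c i) : 0 ≤ ∑ i ∈ s, c i * g i := by
  induction s using Finset.induction_on_max generalizing g with
  | empty => simp
  | insert a s ha ih =>
    have has : a ∉ s := fun h => lt_irrefl a (ha a h)
    have hga : ∀ i ∈ s, g a ≤ g i := fun i hi =>
      hg (mem_insert_of_mem hi) (mem_insert_self a s) (ha i hi).le
    have hrest : 0 ≤ ∑ i ∈ s, c i * (g i - g a) := by
      refine ih _ (fun i hi j hj hij => ?_) (fun i hi => sub_nonneg.2 (hga i hi))
        (fun j hj => ?_)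
      · exact sub_le_sub_right (hg (mem_insert_of_mem hi) (mem_insert_of_mem hj) hij) _
      · have := hc j (mem_insert_of_mem hj)
        rwa [filter_insert, if_neg (not_le.2 (ha j hj))] at this
    have htotal : 0 ≤ ∑ i ∈ insert a s, c i := by
      have := hc a (mem_insert_self a s)
      rwa [filter_true_of_mem fun i hi =>
        (mem_insert.1 hi).elim le_of_eq fun h => (ha i h).le] at this
    calc 0 ≤ ∑ i ∈ s, c i * (g i - g a) + (∑ i ∈ insert a s, c i) * g a :=
          add_nonneg hrest (mul_nonneg htotal (hg0 a (mem_insert_self a s)))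
      _ = ∑ i ∈ insert a s, c i * g i := by
          simp only [sum_insert has, mul_sub, sum_sub_distrib, add_mul, sum_mul]
          ring

lemma sum_le_sum_of_card_eq_of_le {ι : Type*} {s t : Finset ι} {f : ι → ℝ}
    (hst : #s = #t) (h : ∀ i ∈ s, ∀ j ∈ t, f i ≤ f j) : ∑ i ∈ s, f i ≤ ∑ i ∈ t, f i := by
  rcases t.eq_empty_or_nonempty with rfl | ht
  · rw [card_eq_zero.1 hst]
  obtain ⟨j₀, hj₀, hmin⟩ := exists_min_image t f ht
  calc ∑ i ∈ s, f i ≤ #s • f j₀ := sum_le_card_nsmul _ _ _ fun i hi => h i hi j₀ hj₀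
    _ = #t • f j₀ := by rw [hst]
    _ ≤ ∑ i ∈ t, f i := card_nsmul_le_sum _ _ _ hmin

lemma sum_le_sum_of_isLowerSet {ι : Type*} [LinearOrder ι] {a : ι → ℝ} (ha : Antitone a)
    {s t : Finset ι} (ht : IsLowerSet (t : Set ι)) (hst : #s = #t) :
    ∑ i ∈ s, a i ≤ ∑ i ∈ t, a i := by
  classical
  refine sum_sdiff_le_sum_sdiff.1 (sum_le_sum_of_card_eq_of_le (card_sdiff_comm hst) ?_)
  intro i hi j hj
  refine ha (le_of_not_ge fun hij => (mem_sdiff.1 hi).2 ?_)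
  exact ht hij (mem_sdiff.1 hj).1

lemma sum_le_kMaxSum {d : ℕ} (a : Fin d → ℝ) (s : Finset (Fin d)) :
    ∑ i ∈ s, a i ≤ kMaxSum a #s :=
  le_csSup ((Set.toFinite _).image _).bddAbove ⟨s, rfl, rfl⟩

lemma kMaxSum_le_sum_of_isLowerSet {d : ℕ} {a : Fin d → ℝ} (ha : Antitone a)
    {t : Finset (Fin d)} (ht : IsLowerSet (t : Set (Fin d))) :
    kMaxSum a #t ≤ ∑ i ∈ t, a i := by
  refine csSup_le ⟨_, t, rfl, rfl⟩ ?_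
  rintro _ ⟨s, hs, rfl⟩
  exact sum_le_sum_of_isLowerSet ha ht hs

lemma kMaxSum_comp_perm {d : ℕ} (a : Fin d → ℝ) (σ : Equiv.Perm (Fin d)) (k : ℕ) :
    kMaxSum (a ∘ σ) k = kMaxSum a k := by
  unfold kMaxSum
  congr 1
  ext y
  constructor
  · rintro ⟨s, hs, rfl⟩
    exact ⟨s.map σ.toEmbedding, by simpa using hs, by simp [sum_map]⟩
  · rintro ⟨s, hs, rfl⟩
    exact ⟨s.map σ.symm.toEmbedding, by simpa using hs, by simp [sum_map]⟩

lemma exists_perm_antitone {d : ℕ} (a : Fin d → ℝ) : ∃ σ : Equiv.Perm (Fin d), Antitone (a ∘ σ) :=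
  ⟨Tuple.sort (-a), fun _ _ hij => neg_le_neg_iff.1 (Tuple.monotone_sort (-a) hij)⟩

section Counts

variable {ι α : Type*} [DecidableEq α]

def valCount (s : Finset ι) (x : ι → α) (u : α) : ℕ := #{j ∈ s | x j = u}

lemma valCount_insert [DecidableEq ι] {s : Finset ι} {k : ι} (hk : k ∉ s) (x : ι → α) :
    valCount (insert k s) x = valCount s x + Pi.single (x k) 1 := by
  ext u
  rcases eq_or_ne (x k) u with rfl | hu
  · simp [valCount, filter_insert, card_insert_of_notMem (fun h => hk (mem_filter.1 h).1)]
  · simp [valCount, filter_insert, hu, Ne.symm hu]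

lemma valCount_congr {s : Finset ι} {x y : ι → α} (h : ∀ j ∈ s, x j = y j) :
    valCount s x = valCount s y := by
  ext u
  exact congrArg card (filter_congr fun j hj => by rw [h j hj])

lemma valCount_comp_perm (s : Finset ι) (x : ι → α) (σ : Equiv.Perm α) :
    valCount s (σ ∘ x) = valCount s x ∘ σ.symm := by
  ext u
  simp [valCount, Equiv.eq_symm_apply, eq_comm]

lemma prod_comp_eq_prod_pow_valCount [Fintype α] (s : Finset ι) (x : ι → α) (R : α → ℝ) :
    ∏ j ∈ s, R (x j) = ∏ u, R u ^ valCount s x u := by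
  rw [← prod_fiberwise s x]
  refine prod_congr rfl fun u _ => ?_
  rw [prod_congr rfl fun j hj => by rw [(mem_filter.1 hj).2], prod_const]
  rfl

end Counts

def plurC {α : Type*} [Fintype α] (ℓ : ℕ) (ν : α → ℕ) : ℕ :=
  (univ.powersetCard ℓ).sup fun S => ∑ u ∈ S, ν u

lemma plurL_eq_plurC {q L : ℕ} (ℓ : ℕ) (x : Fin L → Fin q) :
    plurL ℓ x = plurC ℓ (valCount univ x) := by
  refine sup_congr rfl fun S _ => ?_
  rw [card_eq_sum_card_fiberwise (f := x) (t := S) fun i hi => by simpa using hi]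
  refine sum_congr rfl fun u hu => ?_
  rw [filter_filter]
  exact congrArg card (filter_congr fun i _ => ⟨And.right, fun h => ⟨h ▸ hu, h⟩⟩)

lemma plurL_comp_perm {q L : ℕ} (ℓ : ℕ) (x : Fin L → Fin q) (σ : Equiv.Perm (Fin q)) :
    plurL ℓ (σ ∘ x) = plurL ℓ x := by
  unfold plurL
  conv_lhs => rw [← map_univ_equiv σ, powersetCard_map, sup_map]
  refine sup_congr rfl fun S _ => ?_
  simp

lemma plurC_le_of_transfer {α : Type*} [Fintype α] [DecidableEq α] (ℓ : ℕ) {μ ν : α → ℕ}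
    {v w : α} (hvw : v ≠ w) (hνv : ν v ≤ μ v) (hνw : ν w ≤ μ v)
    (hsum : ν v + ν w = μ v + μ w) (hrest : ∀ u, u ≠ v → u ≠ w → ν u = μ u) :
    plurC ℓ ν ≤ plurC ℓ μ := by
  refine Finset.sup_le fun S hS => ?_
  by_cases hw : w ∉ S
  · refine (sum_le_sum fun u hu => ?_).trans (le_sup (f := fun S => ∑ u ∈ S, μ u) hS)
    rcases eq_or_ne u v with rfl | huv
    · exact hνv
    · exact (hrest u huv (ne_of_mem_of_not_mem hu hw)).le
  by_cases hv : v ∉ S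
  · have hS' : S.map (Equiv.swap v w).toEmbedding ∈ univ.powersetCard ℓ := by
      simpa using hS
    refine (sum_le_sum fun u hu => ?_).trans
      ((sum_map S _ μ).symm.le.trans (le_sup (f := fun S => ∑ u ∈ S, μ u) hS'))
    rcases eq_or_ne u w with rfl | huw
    · simpa using hνw
    · have huv := ne_of_mem_of_not_mem hu hv
      simp [Equiv.swap_apply_of_ne_of_ne huv huw, hrest u huv huw]
  push Not at hv hw
  have hsplit : ∀ f : α → ℕ, ∑ u ∈ S, f u = ∑ u ∈ S \ {v, w}, f u + (f v + f w) := fun f => by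
    rw [← sum_pair hvw, sum_sdiff (insert_subset hv (singleton_subset_iff.2 hw))]
  refine le_of_eq_of_le ?_ (le_sup (f := fun S => ∑ u ∈ S, μ u) hS)
  rw [hsplit ν, hsplit μ, hsum]
  congr 1
  refine sum_congr rfl fun u hu => ?_
  simp only [mem_sdiff, mem_insert, mem_singleton, not_or] at hu
  exact hrest u hu.2.1 hu.2.2

lemma prod_pow_comp_swap_le {α : Type*} [Fintype α] [DecidableEq α] (m : α → ℕ) {R : α → ℝ}
    (hR0 : ∀ u, 0 ≤ R u) {v w : α} (hRvw : R w ≤ R v) (hm : m w ≤ m v) :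
    ∏ u, R u ^ m (Equiv.swap v w u) ≤ ∏ u, R u ^ m u := by
  rcases eq_or_ne v w with rfl | hvw
  · simp
  have hsplit : ∀ f : α → ℝ, ∏ u, f u = (∏ u ∈ univ \ {v, w}, f u) * (f v * f w) := fun f => by
    rw [← prod_pair hvw, prod_sdiff (subset_univ _)]
  rw [hsplit, hsplit, Equiv.swap_apply_left, Equiv.swap_apply_right]
  have hrest : ∏ u ∈ univ \ {v, w}, R u ^ m (Equiv.swap v w u) = ∏ u ∈ univ \ {v, w}, R u ^ m u :=
    prod_congr rfl fun u hu => by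
      simp only [mem_sdiff, mem_insert, mem_singleton, not_or] at hu
      rw [Equiv.swap_apply_of_ne_of_ne hu.2.1 hu.2.2]
  rw [hrest]
  refine mul_le_mul_of_nonneg_left ?_ (prod_nonneg fun u _ => pow_nonneg (hR0 u) _)
  obtain ⟨d, hd⟩ := Nat.exists_eq_add_of_le hm
  have hcommon : 0 ≤ R v ^ m w * R w ^ m w :=
    mul_nonneg (pow_nonneg (hR0 v) _) (pow_nonneg (hR0 w) _)
  calc R v ^ m w * R w ^ m v = (R v ^ m w * R w ^ m w) * R w ^ d := by rw [hd]; ring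
    _ ≤ (R v ^ m w * R w ^ m w) * R v ^ d :=
        mul_le_mul_of_nonneg_left (pow_le_pow_left₀ (hR0 w) hRvw d) hcommon
    _ = R v ^ m v * R w ^ m w := by rw [hd]; ring

lemma plurC_sub_mul_prod_sub_nonneg {α : Type*} [Fintype α] [DecidableEq α] (ℓ : ℕ) (m : α → ℕ)
    {R : α → ℝ} (hR0 : ∀ u, 0 ≤ R u) {v w : α} (hRvw : R w ≤ R v) :
    0 ≤ ((plurC ℓ (m + Pi.single v 1) : ℝ) - plurC ℓ (m ∘ Equiv.swap v w + Pi.single v 1)) *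
      (∏ u, R u ^ m u - ∏ u, R u ^ m (Equiv.swap v w u)) := by
  rcases eq_or_ne v w with rfl | hvw
  · simp
  wlog hm : m w ≤ m v generalizing m
  · have h := this (m ∘ Equiv.swap v w) (by simpa using (not_le.1 hm).le)
    have hinv : (m ∘ Equiv.swap v w) ∘ Equiv.swap v w = m := by ext u; simp
    simp only [Function.comp_apply, Equiv.swap_apply_self, hinv] at h
    linarith
  refine mul_nonneg (sub_nonneg.2 (Nat.cast_le.2 ?_))
    (sub_nonneg.2 (prod_pow_comp_swap_le m hR0 hRvw hm))
  refine plurC_le_of_transfer ℓ hvw ?_ ?_ ?_ fun u huv huw => ?_ <;>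
    simp [hvw.symm, Equiv.swap_apply_of_ne_of_ne, *]
  omega

lemma two_mul_sum_mul_sub_eq_of_involution {α : Type*} (s : Finset α) {ρ : α → α}
    (hρ : ∀ x ∈ s, ρ x ∈ s) (hρρ : ∀ x ∈ s, ρ (ρ x) = x) (f g : α → ℝ) :
    2 * ∑ x ∈ s, f x * (g x - g (ρ x)) = ∑ x ∈ s, (f x - f (ρ x)) * (g x - g (ρ x)) := by
  have hreflect : ∑ x ∈ s, f x * (g x - g (ρ x)) = ∑ x ∈ s, f (ρ x) * (g (ρ x) - g x) :=
    sum_nbij' ρ ρ hρ hρ hρρ hρρ fun x hx => by rw [hρρ x hx]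
  rw [two_mul]
  nth_rewrite 2 [hreflect]
  rw [← sum_add_distrib]
  exact sum_congr rfl fun x _ => by ring

section Fiber

variable {q L : ℕ} (ℓ : ℕ) (k : Fin L)

def fiberWeight (R : Fin q → ℝ) (x : Fin L → Fin q) : ℝ := ∏ j ∈ univ.erase k, R (x j)

def plurFiberSum (R : Fin q → ℝ) (u : Fin q) : ℝ :=
  ∑ x : Fin L → Fin q with x k = u, (plurL ℓ x : ℝ) * fiberWeight k R x

def relabelExcept (σ : Equiv.Perm (Fin q)) (x : Fin L → Fin q) : Fin L → Fin q :=
  Function.update (σ ∘ x) k (x k)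

lemma plurFiberSum_comp_perm (R : Fin q → ℝ) (σ : Equiv.Perm (Fin q)) (u : Fin q) :
    plurFiberSum ℓ k (R ∘ σ) u = plurFiberSum ℓ k R (σ u) := by
  refine sum_equiv (Equiv.piCongrRight fun _ => σ) (fun x => by simp) fun x _ => ?_
  rw [← plurL_comp_perm ℓ x σ]
  rfl

lemma fiberWeight_relabelExcept (R : Fin q → ℝ) (σ : Equiv.Perm (Fin q)) (x : Fin L → Fin q) :
    fiberWeight k R (relabelExcept k σ x) = fiberWeight k (R ∘ σ) x :=
  prod_congr rfl fun j hj => by simp [relabelExcept, Function.update_of_ne (ne_of_mem_erase hj)]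

lemma valCount_erase_relabelExcept (σ : Equiv.Perm (Fin q)) (x : Fin L → Fin q) :
    valCount (univ.erase k) (relabelExcept k σ x) = valCount (univ.erase k) x ∘ σ.symm := by
  rw [← valCount_comp_perm]
  exact valCount_congr fun j hj => by
    simp [relabelExcept, Function.update_of_ne (ne_of_mem_erase hj)]

lemma relabelExcept_relabelExcept {σ : Equiv.Perm (Fin q)} (hσ : Function.Involutive σ)
    (x : Fin L → Fin q) : relabelExcept k σ (relabelExcept k σ x) = x := by
  ext j
  rcases eq_or_ne j k with rfl | hj
  · simp [relabelExcept]
  · simp [relabelExcept, Function.update_of_ne hj, hσ (x j)]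

lemma plurL_eq_plurC_erase (x : Fin L → Fin q) :
    plurL ℓ x = plurC ℓ (valCount (univ.erase k) x + Pi.single (x k) 1) := by
  rw [plurL_eq_plurC, ← valCount_insert (notMem_erase k univ), insert_erase (mem_univ k)]

lemma plurFiberSum_nonneg {R : Fin q → ℝ} (hR0 : ∀ u, 0 ≤ R u) (u : Fin q) :
    0 ≤ plurFiberSum ℓ k R u :=
  sum_nonneg fun _ _ => mul_nonneg (Nat.cast_nonneg _) (prod_nonneg fun _ _ => hR0 _)

lemma plurFiberSum_antitone {R : Fin q → ℝ} (hR0 : ∀ u, 0 ≤ R u) (hR : Antitone R) :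
    Antitone (plurFiberSum ℓ k R) := by
  intro v w hvw
  set τ := Equiv.swap v w
  set fiber := (univ : Finset (Fin L → Fin q)).filter fun x => x k = v
  have hρ : ∀ x ∈ fiber, relabelExcept k τ x ∈ fiber := fun x hx => by
    simpa [fiber, relabelExcept] using hx
  have hρρ : ∀ x ∈ fiber, relabelExcept k τ (relabelExcept k τ x) = x := fun x _ =>
    relabelExcept_relabelExcept k (Equiv.swap_apply_self v w) x
  have hw : plurFiberSum ℓ k R w =
      ∑ x ∈ fiber, (plurL ℓ x : ℝ) * fiberWeight k R (relabelExcept k τ x) := by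
    rw [← Equiv.swap_apply_left v w, ← plurFiberSum_comp_perm]
    simp only [plurFiberSum, fiberWeight_relabelExcept]
    rfl
  have hterm : ∀ x ∈ fiber, 0 ≤ ((plurL ℓ x : ℝ) - plurL ℓ (relabelExcept k τ x)) *
      (fiberWeight k R x - fiberWeight k R (relabelExcept k τ x)) := fun x hx => by
    have hxk : x k = v := (mem_filter.1 hx).2
    have hρk : relabelExcept k τ x k = v := by simpa [relabelExcept] using hxk
    rw [plurL_eq_plurC_erase ℓ k, plurL_eq_plurC_erase ℓ k, hxk, hρk,
      valCount_erase_relabelExcept, Equiv.symm_swap, fiberWeight, fiberWeight,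
      prod_comp_eq_prod_pow_valCount, prod_comp_eq_prod_pow_valCount,
      valCount_erase_relabelExcept, Equiv.symm_swap]
    exact plurC_sub_mul_prod_sub_nonneg ℓ _ hR0 (hR hvw)
  have hsym := two_mul_sum_mul_sub_eq_of_involution fiber hρ hρρ (fun x => (plurL ℓ x : ℝ))
    (fiberWeight k R)
  have hdiff : plurFiberSum ℓ k R v - plurFiberSum ℓ k R w =
      ∑ x ∈ fiber,
        (plurL ℓ x : ℝ) * (fiberWeight k R x - fiberWeight k R (relabelExcept k τ x)) := by
    rw [hw, plurFiberSum, ← sum_sub_distrib]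
    exact sum_congr rfl fun x _ => by ring
  linarith [sum_nonneg hterm]

end Fiber

section Expectation

variable {q L : ℕ} (ℓ : ℕ)

lemma fqLl_comp_perm (P : Fin q → ℝ) (σ : Equiv.Perm (Fin q)) :
    fqLl q L ℓ (P ∘ σ) = fqLl q L ℓ P := by
  refine Fintype.sum_equiv (Equiv.piCongrRight fun _ => σ) _ _ fun x => ?_
  rw [← plurL_comp_perm ℓ x σ]
  rfl

lemma sum_deriv_prod_mul_plurL (R c : Fin q → ℝ) :
    ∑ x : Fin L → Fin q, (∑ k, (∏ j ∈ univ.erase k, R (x j)) * c (x k)) * (plurL ℓ x : ℝ) =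
      ∑ k : Fin L, ∑ v, c v * plurFiberSum ℓ k R v := by
  simp_rw [sum_mul]
  rw [sum_comm]
  refine sum_congr rfl fun k _ => ?_
  rw [← sum_fiberwise univ fun x : Fin L → Fin q => x k]
  refine sum_congr rfl fun v _ => ?_
  rw [plurFiberSum, mul_sum]
  refine sum_congr rfl fun x hx => ?_
  rw [(mem_filter.1 hx).2, fiberWeight]
  ring

lemma hasDerivAt_fqLl_add_smul (b c : Fin q → ℝ) (t : ℝ) :
    HasDerivAt (fun s : ℝ => fqLl q L ℓ (b + s • c))
      (∑ k : Fin L, ∑ v, c v * plurFiberSum ℓ k (b + t • c) v) t := by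
  rw [← sum_deriv_prod_mul_plurL]
  refine HasDerivAt.fun_sum fun x _ => HasDerivAt.mul_const ?_ _
  have hcoord : ∀ i : Fin L, HasDerivAt (fun s : ℝ => (b + s • c) (x i)) (c (x i)) t := fun i => by
    simpa using ((hasDerivAt_id t).mul_const (c (x i))).const_add (b (x i))
  simpa using HasDerivAt.fun_finsetProd fun i (_ : i ∈ univ) => hcoord i

lemma fqLl_le_of_antitone {a b : Fin q → ℝ} (ha0 : ∀ i, 0 ≤ a i) (hb0 : ∀ i, 0 ≤ b i)
    (ha : Antitone a) (hb : Antitone b)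
    (hprefix : ∀ j, ∑ i with i ≤ j, b i ≤ ∑ i with i ≤ j, a i) :
    fqLl q L ℓ b ≤ fqLl q L ℓ a := by
  set R : ℝ → Fin q → ℝ := fun t => b + t • (a - b)
  have hR0 : ∀ t ∈ Set.Icc (0 : ℝ) 1, ∀ u, 0 ≤ R t u := fun t ht u => by
    simp only [R, Pi.add_apply, Pi.smul_apply, Pi.sub_apply, smul_eq_mul]
    nlinarith [mul_nonneg ht.1 (ha0 u), mul_nonneg (sub_nonneg.2 ht.2) (hb0 u)]
  have hRanti : ∀ t ∈ Set.Icc (0 : ℝ) 1, Antitone (R t) := fun t ht u u' huu' => by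
    simp only [R, Pi.add_apply, Pi.smul_apply, Pi.sub_apply, smul_eq_mul]
    nlinarith [mul_le_mul_of_nonneg_left (ha huu') ht.1,
      mul_le_mul_of_nonneg_left (hb huu') (sub_nonneg.2 ht.2)]
  have hderiv : ∀ t ∈ Set.Icc (0 : ℝ) 1,
      0 ≤ ∑ k : Fin L, ∑ v, (a - b) v * plurFiberSum ℓ k (R t) v := fun t ht =>
    sum_nonneg fun k _ => sum_mul_nonneg_of_partialSums_nonneg univ _ _
      ((plurFiberSum_antitone ℓ k (hR0 t ht) (hRanti t ht)).antitoneOn _)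
      (fun v _ => plurFiberSum_nonneg ℓ k (hR0 t ht) v)
      fun j _ => by simpa [sum_sub_distrib] using hprefix j
  have hmono : MonotoneOn (fun t => fqLl q L ℓ (R t)) (Set.Icc 0 1) :=
    monotoneOn_of_hasDerivWithinAt_nonneg (convex_Icc 0 1)
      (fun t _ => (hasDerivAt_fqLl_add_smul ℓ b (a - b) t).continuousAt.continuousWithinAt)
      (fun t _ => (hasDerivAt_fqLl_add_smul ℓ b (a - b) t).hasDerivWithinAt)
      fun t ht => hderiv t (interior_subset ht)
  simpa [R] using hmono (Set.left_mem_Icc.2 zero_le_one) (Set.right_mem_Icc.2 zero_le_one)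
    zero_le_one

end Expectation

theorem stmt12_general (q L ℓ : ℕ) (P Q : Fin q → ℝ)
    (hP : ∀ i, 0 ≤ P i)
    (hQ : ∀ i, 0 ≤ Q i)
    (hmaj : Majorizes P Q) :
    fqLl q L ℓ Q ≤ fqLl q L ℓ P := by
  obtain ⟨σ, hσ⟩ := exists_perm_antitone P
  obtain ⟨ρ, hρ⟩ := exists_perm_antitone Q
  rw [← fqLl_comp_perm ℓ P σ, ← fqLl_comp_perm ℓ Q ρ]
  refine fqLl_le_of_antitone ℓ (fun _ => hP _) (fun _ => hQ _) hσ hρ fun j => ?_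
  have hlower : IsLowerSet (({i | i ≤ j} : Finset (Fin q)) : Set (Fin q)) := fun i i' hi' hi => by
    simp only [coe_filter, mem_univ, true_and, Set.mem_ofPred_eq] at hi ⊢
    exact hi'.trans hi
  calc ∑ i with i ≤ j, (Q ∘ ρ) i ≤ kMaxSum (Q ∘ ρ) #{i | i ≤ j} := sum_le_kMaxSum _ _
    _ = kMaxSum Q #{i | i ≤ j} := kMaxSum_comp_perm _ _ _
    _ ≤ kMaxSum P #{i | i ≤ j} := hmaj.1 _
    _ = kMaxSum (P ∘ σ) #{i | i ≤ j} := (kMaxSum_comp_perm _ _ _).symm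
    _ ≤ ∑ i with i ≤ j, (P ∘ σ) i := kMaxSum_le_sum_of_isLowerSet hσ hlower

theorem stmt12 (q L ℓ : ℕ) (hq : 2 ≤ q) (hL : 2 ≤ L) (hl1 : 1 ≤ ℓ)
    (hlq : ℓ ≤ q - 1) (P Q : Fin q → ℝ)
    (hP : ∀ i, 0 ≤ P i) (hPsum : ∑ i, P i = 1)
    (hQ : ∀ i, 0 ≤ Q i) (hQsum : ∑ i, Q i = 1)
    (hmaj : Majorizes P Q) :
    fqLl q L ℓ Q ≤ fqLl q L ℓ P :=
  stmt12_general q L ℓ P Q hP hQ hmaj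
end
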